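/- Let r > 2.2 be a real number and let p and q be primes with p > q². Then σ_{-r}(q·p) < σ_{-r}(q²); equivalently, p^{-r} + (qp)^{-r} < q^{-2r}. -/

import Mathlib

open scoped BigOperators

/-- The divisor function `σ_{-r}(n) = ∑_{d ∣ n} d^{-r}`. -/
noncomputable def sigmaNeg (r : ℝ) (n : ℕ) : ℝ := ∑ d ∈ n.divisors, (d : ℝ) ^ (-r)

/-- `u_p(r) = ∏_{q prime, q > p} (1 - q^{-r})⁻¹`. -/
noncomputable def uAfter (r : ℝ) (p : ℕ) : ℝ :=
  ∏' q : {q : Nat.Primes // p < (q : ℕ)}, (1 - ((q.1 : ℕ) : ℝ) ^ (-r))⁻¹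

/-- A prime `p` is `r`-mighty if `1 + p^{-r} > ∏_{q prime, q > p} (1 - q^{-r})⁻¹`. -/
def Mighty (r : ℝ) (p : ℕ) : Prop := uAfter r p < 1 + (p : ℝ) ^ (-r)

/-- `f_p(k) = σ_{-r}(p^k)` for finite `k`, and `f_p(∞) = (1 - p^{-r})⁻¹`. -/
noncomputable def fReal (r : ℝ) (p : ℕ) (k : ℕ∞) : ℝ :=
  if k = ⊤ then (1 - (p : ℝ) ^ (-r))⁻¹
  else ∑ j ∈ Finset.range (k.toNat + 1), ((p : ℝ) ^ (-r)) ^ j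

/-- The value of `σ_{-r}` on the Steinitz number encoded by `α`. -/
noncomputable def steinitzVal (r : ℝ) (α : Nat.Primes → ℕ∞) : ℝ :=
  ∏' p : Nat.Primes, fReal r (p : ℕ) (α p)

/-- The topological closure of the image `σ_{-r}(ℕ)` in `ℝ`. -/
noncomputable def sigmaClosure (r : ℝ) : Set ℝ :=
  closure (Set.range fun n : ℕ+ => sigmaNeg r (n : ℕ))

/-! `σ_{-r}` is multiplicative, so with `a = q^{-r}` we have `σ_{-r}(q·p) = (1 + a)(1 + p^{-r})`
and `σ_{-r}(q²) = 1 + a + a²`; the claim becomes `p^{-r}(1 + a) < a²`. For `r ≥ 2` Bernoulli's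
inequality gives `1 + q^{-r} ≤ 1 + q^{-2} < 1 + r q^{-2} ≤ (1 + q^{-2})^r ≤ (p / q²)^r`
as soon as `q² + 1 ≤ p`. -/

theorem sigmaNeg_mul_of_coprime (r : ℝ) {m n : ℕ} (hmn : m.Coprime n) :
    sigmaNeg r (m * n) = sigmaNeg r m * sigmaNeg r n := by
  unfold sigmaNeg
  rw [Nat.divisors_mul, Finset.mul_def, Finset.sum_image hmn.mul_injOn_divisors,
    Finset.sum_mul_sum, ← Finset.sum_product']
  simp only [Nat.cast_mul, Real.mul_rpow (Nat.cast_nonneg _) (Nat.cast_nonneg _)]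

theorem sigmaNeg_prime_pow (r : ℝ) {p : ℕ} (hp : p.Prime) (k : ℕ) :
    sigmaNeg r (p ^ k) = ∑ i ∈ Finset.range (k + 1), ((p : ℝ) ^ (-r)) ^ i := by
  simp only [sigmaNeg, Nat.sum_divisors_prime_pow hp, Nat.cast_pow,
    Real.rpow_pow_comm (Nat.cast_nonneg p)]

theorem sigmaNeg_prime (r : ℝ) {p : ℕ} (hp : p.Prime) :
    sigmaNeg r p = 1 + (p : ℝ) ^ (-r) := by
  simpa [Finset.sum_range_succ] using sigmaNeg_prime_pow r hp 1

theorem one_add_rpow_neg_lt_one_add_inv_sq_rpow {x r : ℝ} (hx : 1 ≤ x) (hr : 2 ≤ r) :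
    1 + x ^ (-r) < (1 + (x ^ 2)⁻¹) ^ r := by
  have hx2 : 0 < (x ^ 2)⁻¹ := by positivity
  have hle : x ^ (-r) ≤ (x ^ 2)⁻¹ := by
    calc x ^ (-r) ≤ x ^ (-2 : ℝ) := Real.rpow_le_rpow_of_exponent_le hx (by linarith)
      _ = (x ^ 2)⁻¹ := by rw [Real.rpow_neg (by linarith)]; norm_cast
  calc 1 + x ^ (-r) < 1 + r * (x ^ 2)⁻¹ := by nlinarith
    _ ≤ (1 + (x ^ 2)⁻¹) ^ r := one_add_mul_self_le_rpow_one_add (by linarith) (by linarith)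

theorem rpow_neg_mul_one_add_rpow_neg_lt {x y r : ℝ} (hx : 1 ≤ x) (hr : 2 ≤ r)
    (hxy : x ^ 2 + 1 ≤ y) : y ^ (-r) * (1 + x ^ (-r)) < (x ^ (-r)) ^ 2 := by
  have hx0 : 0 < x := by linarith
  have hy0 : 0 < y := by nlinarith
  have hbase : 1 + (x ^ 2)⁻¹ ≤ y / x ^ 2 := by
    rw [le_div_iff₀ (by positivity)]
    field_simp
    linarith
  calc y ^ (-r) * (1 + x ^ (-r)) < y ^ (-r) * (1 + (x ^ 2)⁻¹) ^ r :=
        mul_lt_mul_of_pos_left (one_add_rpow_neg_lt_one_add_inv_sq_rpow hx hr) (by positivity)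
    _ ≤ y ^ (-r) * (y / x ^ 2) ^ r := by gcongr
    _ = (x ^ (-r)) ^ 2 := by
        rw [Real.div_rpow hy0.le (by positivity), ← Real.rpow_pow_comm hx0.le,
          Real.rpow_neg hy0.le, Real.rpow_neg hx0.le]
        field_simp

theorem statement3 (r : ℝ) (hr : (2.2 : ℝ) < r) (p q : ℕ) (hp : p.Prime) (hq : q.Prime)
    (hpq : q ^ 2 < p) :
    sigmaNeg r (q * p) < sigmaNeg r (q ^ 2) := by
  have hqp : q ≠ p := (show q < p by nlinarith [hq.two_le]).ne
  have key := rpow_neg_mul_one_add_rpow_neg_lt (x := q) (y := p)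
    (by exact_mod_cast hq.one_lt.le) (by linarith) (by exact_mod_cast hpq)
  rw [sigmaNeg_mul_of_coprime r ((Nat.coprime_primes hq hp).mpr hqp), sigmaNeg_prime r hq,
    sigmaNeg_prime r hp, sigmaNeg_prime_pow r hq]
  simp only [Finset.sum_range_succ, Finset.sum_range_zero]
  nlinarith
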